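/- arXiv:2003.05219 — 2 statements merged into one kernel-verified Lean document; each statement's English description precedes it below -/
import Mathlib

section
/- Let Φ : ℂⁿ → B(H) be Borel with H separable, λ ∈ ℂⁿ, g ∈ H, and suppose the function w ↦ Φ(w)k_λ(w)g lies in L²(μ_G;H). Then for every z ∈ ℂⁿ, the orthogonal projection P of L²(μ_G;H) onto the vector-valued Segal–Bargmann space B⊗H satisfies (P(Φ·(k_λ⊗g)))(z) = k_λ(z) · (P(Φ_λ ⊗ g))(z - λ), where Φ_λ(u) = Φ(u+λ) and (Φ_λ⊗g)(u) = Φ(u+λ)g. -/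
/-!
Put `q z = k_λ(z) p₂(z - λ)`. The substitution `w = u + λ` turns `μ_G` into the measure with
density `exp (-2 Re⟨u, λ⟩ - ‖λ‖²)` against `μ_G`. Hence `f ↦ k_λ f(· - λ)` maps `L²(μ_G; H)` into
itself, and its adjoint is `G ↦ k_{-λ} G(· + λ)`. The adjoint preserves analyticity, so
`f ↦ k_λ f(· - λ)` preserves `(B ⊗ H)^⊥`. Now `Φ (k_λ ⊗ g) - q` is the image of
`Φ_λ ⊗ g - P(Φ_λ ⊗ g)`, which lies in `(B ⊗ H)^⊥`, and `q ∈ B ⊗ H`; so `q = P(Φ (k_λ ⊗ g))`.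
Both sides of the formula are continuous and `μ_G` charges every open set, so a.e. equality
upgrades to equality everywhere.
-/

open MeasureTheory Complex ENNReal Filter

noncomputable section

/-- `ℂⁿ` with the standard Hermitian structure. -/
abbrev Cn (n : ℕ) := EuclideanSpace ℂ (Fin n)

instance (n : ℕ) : MeasurableSpace (Cn n) := borel _
instance (n : ℕ) : BorelSpace (Cn n) := ⟨rfl⟩

/-- The Gaussian measure `dμ_G(z) = π^{-n} exp(-|z|²) dV(z)` on `ℂⁿ`. -/
def gaussian (n : ℕ) : Measure (Cn n) :=
  volume.withDensity fun z =>
    ENNReal.ofReal ((Real.pi ^ n)⁻¹ * Real.exp (-‖z‖ ^ 2))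

/-- The reproducing kernel function `k_λ(z) = exp(⟨z,λ⟩)`, where `⟨z,λ⟩ = Σ z_i conj(λ_i)`
(which in Mathlib's convention is `⟪λ, z⟫`). -/
def kern {n : ℕ} (lam z : Cn n) : ℂ := Complex.exp ((inner ℂ lam z : ℂ))

variable {H : Type} [NormedAddCommGroup H] [InnerProductSpace ℂ H] [CompleteSpace H]

/-- The vector-valued Segal–Bargmann space `B ⊗ H`, viewed as the set of elements of
`L²(μ_G; H)` admitting an analytic representative. -/
def SegalBargmann (n : ℕ) (H : Type) [NormedAddCommGroup H] [InnerProductSpace ℂ H] :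
    Set (Lp H 2 (gaussian n)) :=
  {F | ∃ f : Cn n → H, AnalyticOn ℂ f Set.univ ∧ ∀ᵐ z ∂(gaussian n), F z = f z}

open ComplexConjugate

def gaussianDensity (n : ℕ) (z : Cn n) : ℝ := (Real.pi ^ n)⁻¹ * Real.exp (-‖z‖ ^ 2)

lemma gaussian_eq_withDensity (n : ℕ) :
    gaussian n = volume.withDensity fun z => ENNReal.ofReal (gaussianDensity n z) := rfl

lemma gaussianDensity_pos {n : ℕ} (z : Cn n) : 0 < gaussianDensity n z := by
  unfold gaussianDensity; positivity

lemma measurable_gaussianDensity (n : ℕ) : Measurable (gaussianDensity n) := by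
  unfold gaussianDensity; fun_prop

def translateDensity {n : ℕ} (lam u : Cn n) : ℝ :=
  Real.exp (-(2 * (inner ℂ lam u : ℂ).re) - ‖lam‖ ^ 2)

lemma continuous_translateDensity {n : ℕ} (lam : Cn n) : Continuous (translateDensity lam) := by
  unfold translateDensity; fun_prop

lemma gaussianDensity_add {n : ℕ} (u lam : Cn n) :
    gaussianDensity n (u + lam) = gaussianDensity n u * translateDensity lam u := by
  have hnorm : ‖u + lam‖ ^ 2 = ‖u‖ ^ 2 + 2 * (inner ℂ lam u : ℂ).re + ‖lam‖ ^ 2 := by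
    rw [← inner_conj_symm, Complex.conj_re]
    simpa using norm_add_sq (𝕜 := ℂ) u lam
  rw [gaussianDensity, gaussianDensity, translateDensity, mul_assoc, ← Real.exp_add, hnorm]
  ring_nf

lemma gaussian_map_sub_const {n : ℕ} (lam : Cn n) :
    (gaussian n).map (· - lam) =
      (gaussian n).withDensity fun u => ENNReal.ofReal (translateDensity lam u) := by
  have hsub : Measurable fun w : Cn n => w - lam := measurable_sub_const lam
  ext s hs
  rw [Measure.map_apply hsub hs, gaussian_eq_withDensity, withDensity_apply _ (hsub hs),
    withDensity_apply _ hs,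
    setLIntegral_withDensity_eq_setLIntegral_mul _ (measurable_gaussianDensity n).ennreal_ofReal
      (continuous_translateDensity lam).measurable.ennreal_ofReal hs,
    ← (measurePreserving_add_right volume lam).setLIntegral_comp_preimage_emb
      (MeasurableEquiv.addRight lam).measurableEmbedding]
  have hpre : (· + lam) ⁻¹' ((· - lam) ⁻¹' s) = s := by ext u; simp
  rw [hpre]
  refine setLIntegral_congr_fun hs fun u _ => ?_
  rw [Pi.mul_apply, gaussianDensity_add, ENNReal.ofReal_mul (gaussianDensity_pos u).le]

lemma quasiMeasurePreserving_sub_const {n : ℕ} (lam : Cn n) :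
    Measure.QuasiMeasurePreserving (· - lam) (gaussian n) (gaussian n) :=
  ⟨measurable_sub_const lam, by
    rw [gaussian_map_sub_const]; exact withDensity_absolutelyContinuous _ _⟩

lemma MeasureTheory.AEStronglyMeasurable.comp_sub_const {n : ℕ} {E : Type*} [TopologicalSpace E]
    {f : Cn n → E} (hf : AEStronglyMeasurable f (gaussian n)) (lam : Cn n) :
    AEStronglyMeasurable (fun w => f (w - lam)) (gaussian n) :=
  hf.comp_quasiMeasurePreserving (quasiMeasurePreserving_sub_const lam)

lemma integral_gaussian_comp_sub_const {n : ℕ} {E : Type*} [NormedAddCommGroup E]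
    [NormedSpace ℝ E] (lam : Cn n) {f : Cn n → E} (hf : AEStronglyMeasurable f (gaussian n)) :
    ∫ w, f (w - lam) ∂(gaussian n) = ∫ u, translateDensity lam u • f u ∂(gaussian n) := by
  have hf' : AEStronglyMeasurable f ((gaussian n).map (· - lam)) :=
    hf.mono_ac (quasiMeasurePreserving_sub_const lam).absolutelyContinuous
  rw [← integral_map (measurable_sub_const lam).aemeasurable hf', gaussian_map_sub_const,
    integral_withDensity_eq_integral_toReal_smul
      (continuous_translateDensity lam).measurable.ennreal_ofReal
      (ae_of_all _ fun _ => ENNReal.ofReal_lt_top)]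
  simp only [ENNReal.toReal_ofReal (Real.exp_pos _).le, translateDensity]

lemma integrable_gaussian_comp_sub_const_iff {n : ℕ} {E : Type*} [NormedAddCommGroup E]
    [NormedSpace ℝ E] (lam : Cn n) {f : Cn n → E} (hf : AEStronglyMeasurable f (gaussian n)) :
    Integrable (fun w => f (w - lam)) (gaussian n) ↔
      Integrable (fun u => translateDensity lam u • f u) (gaussian n) := by
  have hf' : AEStronglyMeasurable f ((gaussian n).map (· - lam)) :=
    hf.mono_ac (quasiMeasurePreserving_sub_const lam).absolutelyContinuous
  refine (integrable_map_measure hf' (measurable_sub_const lam).aemeasurable).symm.trans ?_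
  rw [gaussian_map_sub_const, integrable_withDensity_iff_integrable_smul'
      (continuous_translateDensity lam).measurable.ennreal_ofReal
      (ae_of_all _ fun _ => ENNReal.ofReal_lt_top)]
  simp only [ENNReal.toReal_ofReal (Real.exp_pos _).le, translateDensity]

instance (n : ℕ) : (gaussian n).IsOpenPosMeasure :=
  Measure.AbsolutelyContinuous.isOpenPosMeasure (μ := volume) <|
    withDensity_absolutelyContinuous' (measurable_gaussianDensity n).ennreal_ofReal.aemeasurable
      (ae_of_all _ fun z => (ENNReal.ofReal_pos.2 (gaussianDensity_pos z)).ne')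

lemma continuous_kern {n : ℕ} (lam : Cn n) : Continuous (kern lam) := by
  unfold kern; fun_prop

lemma analyticOnNhd_kern {n : ℕ} (lam : Cn n) : AnalyticOnNhd ℂ (kern lam) Set.univ :=
  ((innerSL ℂ lam).analyticOnNhd _).cexp

lemma kern_add_self {n : ℕ} (lam u : Cn n) :
    kern lam (u + lam) = Complex.exp ((inner ℂ lam u : ℂ) + (‖lam‖ ^ 2 : ℝ)) := by
  rw [kern, inner_add_right, inner_self_eq_norm_sq_to_K]
  norm_cast

lemma translateDensity_mul_norm_kern_sq {n : ℕ} (lam u : Cn n) :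
    translateDensity lam u * ‖kern lam (u + lam)‖ ^ 2 = Real.exp (‖lam‖ ^ 2) := by
  rw [kern_add_self, Complex.norm_exp, ← Real.exp_nat_mul, translateDensity, ← Real.exp_add,
    Complex.add_re, Complex.ofReal_re]
  ring_nf

lemma translateDensity_mul_conj_kern {n : ℕ} (lam u : Cn n) :
    (translateDensity lam u : ℂ) * conj (kern lam (u + lam)) = kern (-lam) u := by
  rw [kern_add_self, ← Complex.exp_conj, translateDensity, Complex.ofReal_exp, ← Complex.exp_add,
    kern, inner_neg_left, map_add, Complex.conj_ofReal]
  congr 1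
  have hre : ((2 * (inner ℂ lam u : ℂ).re : ℝ) : ℂ) = inner ℂ lam u + conj (inner ℂ lam u) := by
    rw [Complex.add_conj]
  push_cast at hre ⊢
  rw [hre]; ring

section kernShift

variable {n : ℕ} {E : Type*} [NormedAddCommGroup E] [InnerProductSpace ℂ E]

/-- Up to the factor `exp (-‖lam‖ ^ 2 / 2)`, the Weyl unitary of `L²(μ_G)`. -/
def kernShift (lam : Cn n) (f : Cn n → E) (z : Cn n) : E := kern lam z • f (z - lam)

lemma analyticOn_kernShift {f : Cn n → E} (hf : AnalyticOn ℂ f Set.univ) (lam : Cn n) :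
    AnalyticOn ℂ (kernShift lam f) Set.univ := by
  rw [analyticOn_univ] at hf ⊢
  exact (analyticOnNhd_kern lam).smul
    (hf.comp (analyticOnNhd_id.sub analyticOnNhd_const) (Set.mapsTo_univ _ _))

lemma aestronglyMeasurable_kernShift {f : Cn n → E}
    (hf : AEStronglyMeasurable f (gaussian n)) (lam : Cn n) :
    AEStronglyMeasurable (kernShift lam f) (gaussian n) :=
  (continuous_kern lam).aestronglyMeasurable.smul (hf.comp_sub_const lam)

lemma memLp_kernShift {f : Cn n → E} (hf : MemLp f 2 (gaussian n)) (lam : Cn n) :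
    MemLp (kernShift lam f) 2 (gaussian n) := by
  rw [memLp_two_iff_integrable_sq_norm (aestronglyMeasurable_kernShift hf.1 lam)]
  have hF : AEStronglyMeasurable (fun u => ‖kern lam (u + lam)‖ ^ 2 * ‖f u‖ ^ 2) (gaussian n) :=
    (((continuous_kern lam).comp (continuous_add_const lam)).norm.pow 2).aestronglyMeasurable.mul
      (hf.1.norm.pow 2)
  have hsq : Integrable (fun u => Real.exp (‖lam‖ ^ 2) * ‖f u‖ ^ 2) (gaussian n) :=
    ((memLp_two_iff_integrable_sq_norm hf.1).1 hf).const_mul _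
  have := (integrable_gaussian_comp_sub_const_iff lam hF).2 <| hsq.congr <| ae_of_all _ fun u => by
    dsimp only
    rw [smul_eq_mul, ← mul_assoc, translateDensity_mul_norm_kern_sq]
  simpa only [kernShift, norm_smul, mul_pow, sub_add_cancel] using this

lemma integral_inner_kernShift {f G : Cn n → E} (hf : AEStronglyMeasurable f (gaussian n))
    (hG : AEStronglyMeasurable G (gaussian n)) (lam : Cn n) :
    ∫ w, (inner ℂ (kernShift lam f w) (G w) : ℂ) ∂(gaussian n) =
      ∫ u, (inner ℂ (f u) (kernShift (-lam) G u) : ℂ) ∂(gaussian n) := by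
  have hG' : AEStronglyMeasurable (fun u => G (u + lam)) (gaussian n) := by
    simpa only [sub_neg_eq_add] using hG.comp_sub_const (-lam)
  set F : Cn n → ℂ := fun u => inner ℂ (kern lam (u + lam) • f u) (G (u + lam))
  have hF : AEStronglyMeasurable F (gaussian n) :=
    (((continuous_kern lam).comp (continuous_add_const lam)).aestronglyMeasurable.smul hf).inner hG'
  calc ∫ w, (inner ℂ (kernShift lam f w) (G w) : ℂ) ∂(gaussian n)
      = ∫ w, F (w - lam) ∂(gaussian n) := by simp only [F, kernShift, sub_add_cancel]
    _ = ∫ u, translateDensity lam u • F u ∂(gaussian n) := integral_gaussian_comp_sub_const lam hF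
    _ = ∫ u, (inner ℂ (f u) (kernShift (-lam) G u) : ℂ) ∂(gaussian n) := by
      refine integral_congr_ae (ae_of_all _ fun u => ?_)
      dsimp only [F, kernShift]
      rw [sub_neg_eq_add, inner_smul_left, inner_smul_right, Complex.real_smul,
        ← mul_assoc, translateDensity_mul_conj_kern]

end kernShift

lemma eq_of_forall_inner_sub_eq_zero {𝕜 E : Type*} [RCLike 𝕜] [NormedAddCommGroup E]
    [InnerProductSpace 𝕜 E] {S : Set E} {x a b : E} (hab : a - b ∈ S)
    (ha : ∀ y ∈ S, (inner 𝕜 (x - a) y : 𝕜) = 0) (hb : ∀ y ∈ S, (inner 𝕜 (x - b) y : 𝕜) = 0) :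
    a = b := by
  rw [← sub_eq_zero, ← inner_self_eq_zero (𝕜 := 𝕜)]
  calc (inner 𝕜 (a - b) (a - b) : 𝕜)
      = inner 𝕜 (x - b) (a - b) - inner 𝕜 (x - a) (a - b) := by
        rw [← inner_sub_left]; congr 1; abel
    _ = 0 := by rw [hb _ hab, ha _ hab, sub_zero]

section SegalBargmann

variable {n : ℕ} {E : Type} [NormedAddCommGroup E] [InnerProductSpace ℂ E]

lemma sub_mem_segalBargmann {F G : Lp E 2 (gaussian n)} (hF : F ∈ SegalBargmann n E)
    (hG : G ∈ SegalBargmann n E) : F - G ∈ SegalBargmann n E := by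
  obtain ⟨f, hf, hFf⟩ := hF
  obtain ⟨g, hg, hGg⟩ := hG
  refine ⟨f - g, analyticOn_univ.2 (analyticOn_univ.1 hf |>.sub (analyticOn_univ.1 hg)), ?_⟩
  filter_upwards [Lp.coeFn_sub F G, hFf, hGg] with z hsub hfz hgz
  rw [hsub, Pi.sub_apply, hfz, hgz, Pi.sub_apply]

/-- Since `kernShift (-lam)` maps `B ⊗ H` into itself, its adjoint `kernShift lam` preserves
the orthogonal complement of `B ⊗ H`. -/
lemma inner_eq_zero_of_ae_eq_kernShift {R R' : Lp E 2 (gaussian n)} (lam : Cn n)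
    (hR : ∀ G ∈ SegalBargmann n E, (inner ℂ R G : ℂ) = 0)
    (hR' : R' =ᵐ[gaussian n] kernShift lam R) (G : Lp E 2 (gaussian n))
    (hG : G ∈ SegalBargmann n E) : (inner ℂ R' G : ℂ) = 0 := by
  obtain ⟨h, hh, hGh⟩ := hG
  have hhL : MemLp h 2 (gaussian n) := (Lp.memLp G).ae_eq hGh
  have hShift := memLp_kernShift hhL (-lam)
  calc (inner ℂ R' G : ℂ)
      = ∫ w, (inner ℂ (kernShift lam R w) (h w) : ℂ) ∂(gaussian n) := by
        rw [L2.inner_def]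
        refine integral_congr_ae ?_
        filter_upwards [hR', hGh] with w hR'w hGw
        rw [hR'w, hGw]
    _ = ∫ u, (inner ℂ (R u) (kernShift (-lam) h u) : ℂ) ∂(gaussian n) :=
        integral_inner_kernShift (Lp.aestronglyMeasurable R) hhL.1 lam
    _ = inner ℂ R (hShift.toLp _) := by
        rw [L2.inner_def]
        refine integral_congr_ae ?_
        filter_upwards [hShift.coeFn_toLp] with u hu
        rw [hu]
    _ = 0 := hR _ ⟨_, analyticOn_kernShift hh (-lam), hShift.coeFn_toLp⟩

end SegalBargmann

/-- if `P` is the orthogonal projection of `L²(μ_G;H)` onto the Segal–Bargmann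
space `B ⊗ H`, then `(P(Φ·(k_λ⊗g)))(z) = k_λ(z) · (P(Φ_λ ⊗ g))(z − λ)` for all `z`,
where `Φ_λ(u) = Φ(u+λ)`; the two sides are compared through analytic representatives. -/
theorem toeplitz_translation_formula {n : ℕ}
    (P : Lp H 2 (gaussian n) →L[ℂ] Lp H 2 (gaussian n))
    (hP_range : ∀ F, P F ∈ SegalBargmann n H)
    (hP_orth : ∀ F, ∀ G ∈ SegalBargmann n H, (inner ℂ (F - P F) G : ℂ) = 0)
    (Φ : Cn n → H →L[ℂ] H) (lam : Cn n) (g : H)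
    (F₁ F₂ : Lp H 2 (gaussian n))
    (hF₁ : ∀ᵐ w ∂(gaussian n), F₁ w = kern lam w • Φ w g)
    (hF₂ : ∀ᵐ w ∂(gaussian n), F₂ w = Φ (w + lam) g)
    (p₁ p₂ : Cn n → H)
    (hp₁a : AnalyticOn ℂ p₁ Set.univ) (hp₁ : ∀ᵐ z ∂(gaussian n), (P F₁) z = p₁ z)
    (hp₂a : AnalyticOn ℂ p₂ Set.univ) (hp₂ : ∀ᵐ z ∂(gaussian n), (P F₂) z = p₂ z) :
    ∀ z : Cn n, p₁ z = kern lam z • p₂ (z - lam) := by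
  have hq : MemLp (kernShift lam p₂) 2 (gaussian n) :=
    memLp_kernShift ((Lp.memLp (P F₂)).ae_eq hp₂) lam
  have hqa := analyticOn_kernShift hp₂a lam
  have hPF₁ : P F₁ = hq.toLp _ := by
    refine eq_of_forall_inner_sub_eq_zero
      (sub_mem_segalBargmann (hP_range F₁) ⟨_, hqa, hq.coeFn_toLp⟩) (hP_orth F₁)
      (inner_eq_zero_of_ae_eq_kernShift lam (hP_orth F₂) ?_)
    have hT := quasiMeasurePreserving_sub_const lam
    filter_upwards [Lp.coeFn_sub F₁ (hq.toLp _), hF₁, hq.coeFn_toLp,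
      hT.ae (Lp.coeFn_sub F₂ (P F₂)), hT.ae hF₂, hT.ae hp₂]
      with w hsub₁ hF₁w hqw hsub₂ hF₂w hp₂w
    rw [hsub₁, Pi.sub_apply, hF₁w, hqw, kernShift, kernShift, hsub₂, Pi.sub_apply, hF₂w, hp₂w,
      sub_add_cancel, smul_sub]
  have hp₁q : p₁ =ᵐ[gaussian n] kernShift lam p₂ := by
    filter_upwards [hp₁, hq.coeFn_toLp] with z hp₁z hqz
    rw [← hp₁z, hPF₁, hqz]
  exact congrFun <| (Continuous.ae_eq_iff_eq _ (continuousOn_univ.1 hp₁a.continuousOn)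
    (continuousOn_univ.1 hqa.continuousOn)).1 hp₁q
end
end

section
/- Let H be a separable Hilbert space, let Φ : ℂⁿ → B(H) be Borel, let γ : ℂⁿ×ℂⁿ → ℂ be Borel, and suppose that z ↦ exp(|z|²)·∫|γ(z,w)|²‖Ξ_Φ(z,w)‖²_{HS} dμ_G(w) is μ_G-integrable. Then the kernel Θ(x,y) whose adjoint acts by Θ(x,y)*g = γ(x, y−x)·k_x(y)·Ξ_Φ(x, y−x)g satisfies ∫∫ ‖Θ(x,y)‖²_{HS} dμ_G(x)dμ_G(y) < ∞, i.e. Θ is a Hilbert–Schmidt kernel. -/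
open MeasureTheory Complex ENNReal Filter

noncomputable section

variable {H : Type} [NormedAddCommGroup H] [InnerProductSpace ℂ H] [CompleteSpace H]

/-- The squared Hilbert–Schmidt norm of an operator, computed in a Hilbert basis
(with value `∞` when the operator is not Hilbert–Schmidt). -/
def hsNormSq {ι : Type} (b : HilbertBasis ι ℂ H) (A : H →L[ℂ] H) : ℝ≥0∞ :=
  ∑' i, (‖A (b i)‖₊ : ℝ≥0∞) ^ 2

/-! Since `‖A*‖_HS = ‖A‖_HS`, the defining identity of `Θ` gives
`‖Θ(x,y)‖²_HS = |k_x(y)|² |γ(x,y-x)|² ‖Ξ(x,y-x)‖²_HS`. The weight `|k_x(y)|² = exp(2 Re⟨y,x⟩)`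
recombines with the Gaussian density through `2 Re⟨y,x⟩ - |y|² = |x|² - |y-x|²`, so by
translation invariance of Lebesgue measure (`w = y - x`) the inner integral over `y` equals
`exp(|x|²) ∫ |γ(x,w)|² ‖Ξ(x,w)‖²_HS dμ_G(w)`, the integrand of the hypothesis. -/

theorem HilbertBasis.enorm_sq_eq_tsum_inner {𝕜 E ι : Type*} [RCLike 𝕜] [NormedAddCommGroup E]
    [InnerProductSpace 𝕜 E] (b : HilbertBasis ι 𝕜 E) (v : E) :
    ‖v‖ₑ ^ 2 = ∑' i, ‖(inner 𝕜 (b i) v : 𝕜)‖ₑ ^ 2 := by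
  have hterm (i : ι) :
      inner 𝕜 v (b i) * inner 𝕜 (b i) v = ((‖(inner 𝕜 (b i) v : 𝕜)‖ ^ 2 : ℝ) : 𝕜) := by
    rw [← inner_conj_symm, RCLike.conj_mul]
    push_cast
    rfl
  have hparseval : HasSum (fun i => ‖(inner 𝕜 (b i) v : 𝕜)‖ ^ 2) (‖v‖ ^ 2) := by
    have := b.hasSum_inner_mul_inner v v
    simp only [hterm, inner_self_eq_norm_sq_to_K] at this
    exact (RCLike.hasSum_ofReal 𝕜).1 (by exact_mod_cast this)
  simp only [← ofReal_norm, ← ENNReal.ofReal_pow (norm_nonneg _)]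
  rw [← hparseval.tsum_eq,
    ENNReal.ofReal_tsum_of_nonneg (fun _ => by positivity) hparseval.summable]

section HilbertSchmidt

variable {E ι : Type} [NormedAddCommGroup E] [InnerProductSpace ℂ E] (b : HilbertBasis ι ℂ E)

theorem hsNormSq_smul (c : ℂ) (A : E →L[ℂ] E) :
    hsNormSq b (c • A) = ‖c‖ₑ ^ 2 * hsNormSq b A := by
  simp only [hsNormSq, FunLike.coe_smul, Pi.smul_apply, nnnorm_smul, ENNReal.coe_mul, mul_pow,
    ENNReal.tsum_mul_left]
  rfl

theorem hsNormSq_adjoint [CompleteSpace E] (A : E →L[ℂ] E) :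
    hsNormSq b (ContinuousLinearMap.adjoint A) = hsNormSq b A := by
  simp only [hsNormSq, ← enorm_eq_nnnorm]
  calc ∑' i, ‖ContinuousLinearMap.adjoint A (b i)‖ₑ ^ 2
      = ∑' i, ∑' j, ‖(inner ℂ (b j) (ContinuousLinearMap.adjoint A (b i)) : ℂ)‖ₑ ^ 2 := by
        simp_rw [← b.enorm_sq_eq_tsum_inner]
    _ = ∑' j, ∑' i, ‖(inner ℂ (b i) (A (b j)) : ℂ)‖ₑ ^ 2 := by
        rw [ENNReal.tsum_comm]
        simp_rw [ContinuousLinearMap.adjoint_inner_right, ← inner_conj_symm (A _),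
          RCLike.enorm_conj]
    _ = ∑' j, ‖A (b j)‖ₑ ^ 2 := by simp_rw [← b.enorm_sq_eq_tsum_inner]

end HilbertSchmidt

theorem exp_two_re_inner_mul_exp_neg_norm_sq {𝕜 E : Type*} [RCLike 𝕜] [NormedAddCommGroup E]
    [InnerProductSpace 𝕜 E] (x y : E) :
    Real.exp (2 * RCLike.re (inner 𝕜 x y)) * Real.exp (-‖y‖ ^ 2)
      = Real.exp (‖x‖ ^ 2) * Real.exp (-‖y - x‖ ^ 2) := by
  rw [← Real.exp_add, ← Real.exp_add, @norm_sub_sq 𝕜, inner_re_symm]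
  ring_nf

section Gaussian

variable {n : ℕ}

theorem enorm_kern_sq (x y : Cn n) :
    ‖kern x y‖ₑ ^ 2 = ENNReal.ofReal (Real.exp (2 * (inner ℂ x y).re)) := by
  rw [← ofReal_norm, ← ENNReal.ofReal_pow (norm_nonneg _), kern, Complex.norm_exp,
    ← Real.exp_nat_mul]
  norm_num

theorem lintegral_gaussian (f : Cn n → ℝ≥0∞) :
    ∫⁻ z, f z ∂gaussian n
      = ∫⁻ z, ENNReal.ofReal ((Real.pi ^ n)⁻¹ * Real.exp (-‖z‖ ^ 2)) * f z := by
  rw [gaussian, lintegral_withDensity_eq_lintegral_mul_non_measurable _ (by fun_prop)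
    (.of_forall fun _ => ENNReal.ofReal_lt_top)]
  rfl

theorem lintegral_enorm_kern_sq_mul_comp_sub (x : Cn n) (f : Cn n → ℝ≥0∞) :
    ∫⁻ y, ‖kern x y‖ₑ ^ 2 * f (y - x) ∂gaussian n
      = ENNReal.ofReal (Real.exp (‖x‖ ^ 2)) * ∫⁻ w, f w ∂gaussian n := by
  have hshift := lintegral_sub_right_eq_self (μ := volume)
    (fun w => ENNReal.ofReal ((Real.pi ^ n)⁻¹ * Real.exp (-‖w‖ ^ 2)) * f w) x
  rw [lintegral_gaussian, lintegral_gaussian, ← hshift,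
    ← lintegral_const_mul' _ _ ENNReal.ofReal_ne_top]
  congr 1 with y
  have hdensity : ENNReal.ofReal ((Real.pi ^ n)⁻¹ * Real.exp (-‖y‖ ^ 2)) * ‖kern x y‖ₑ ^ 2
      = ENNReal.ofReal (Real.exp (‖x‖ ^ 2))
          * ENNReal.ofReal ((Real.pi ^ n)⁻¹ * Real.exp (-‖y - x‖ ^ 2)) := by
    rw [enorm_kern_sq, ← ENNReal.ofReal_mul (by positivity),
      ← ENNReal.ofReal_mul (by positivity)]
    congr 1
    linear_combination (Real.pi ^ n)⁻¹ * exp_two_re_inner_mul_exp_neg_norm_sq (𝕜 := ℂ) x y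
  rw [← mul_assoc, hdensity, mul_assoc]

end Gaussian

theorem weighted_kernel_hilbertSchmidt_general {n : ℕ} {ι : Type} (b : HilbertBasis ι ℂ H)
    (γ : Cn n → Cn n → ℂ)
    (Xi : Cn n → Cn n → H →L[ℂ] H)
    (halpha : ∫⁻ z, ENNReal.ofReal (Real.exp (‖z‖ ^ 2)) *
        ∫⁻ w, (‖γ z w‖₊ : ℝ≥0∞) ^ 2 * hsNormSq b (Xi z w) ∂(gaussian n)
        ∂(gaussian n) < ∞)
    (Θ : Cn n → Cn n → H →L[ℂ] H)
    (hΘ : ∀ (x y : Cn n) (g : H),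
      ContinuousLinearMap.adjoint (Θ x y) g = γ x (y - x) • (kern x y • Xi x (y - x) g)) :
    ∫⁻ x, ∫⁻ y, hsNormSq b (Θ x y) ∂(gaussian n) ∂(gaussian n) < ∞ := by
  have hΘ_adjoint (x y : Cn n) :
      ContinuousLinearMap.adjoint (Θ x y) = (γ x (y - x) * kern x y) • Xi x (y - x) := by
    ext g
    rw [hΘ, smul_apply, mul_smul]
  have hΘ_hsNormSq (x y : Cn n) : hsNormSq b (Θ x y)
      = ‖kern x y‖ₑ ^ 2 * (‖γ x (y - x)‖ₑ ^ 2 * hsNormSq b (Xi x (y - x))) := by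
    rw [← hsNormSq_adjoint, hΘ_adjoint, hsNormSq_smul, enorm_mul, mul_pow]
    ring
  calc ∫⁻ x, ∫⁻ y, hsNormSq b (Θ x y) ∂gaussian n ∂gaussian n
      = ∫⁻ x, ENNReal.ofReal (Real.exp (‖x‖ ^ 2)) *
          ∫⁻ w, ‖γ x w‖ₑ ^ 2 * hsNormSq b (Xi x w) ∂gaussian n ∂gaussian n :=
        lintegral_congr fun x => by
          simp_rw [hΘ_hsNormSq]
          exact lintegral_enorm_kern_sq_mul_comp_sub x fun w => ‖γ x w‖ₑ ^ 2 * hsNormSq b (Xi x w)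
    _ < ∞ := halpha

/-- if `z ↦ exp(|z|²)·∫ |γ(z,w)|² ‖Ξ_Φ(z,w)‖²_{HS} dμ_G(w)` is
`μ_G`-integrable, then the kernel `Θ` with `Θ(x,y)* g = γ(x,y−x)·k_x(y)·Ξ_Φ(x,y−x)g`
is a Hilbert–Schmidt kernel: `∫∫ ‖Θ(x,y)‖²_{HS} dμ_G(x) dμ_G(y) < ∞`. -/
theorem weighted_kernel_hilbertSchmidt {n : ℕ} {ι : Type} (b : HilbertBasis ι ℂ H)
    (Φ : Cn n → H →L[ℂ] H) (γ : Cn n → Cn n → ℂ)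
    (hγ : Measurable fun p : Cn n × Cn n => γ p.1 p.2)
    (Xi : Cn n → Cn n → H →L[ℂ] H)
    (hInt : ∀ (z w : Cn n) (g : H),
      Integrable (fun u => (starRingEnd ℂ) (kern w u) • Φ (z + u) g) (gaussian n))
    (hXi : ∀ (z w : Cn n) (g : H),
      Xi z w g = ∫ u, (starRingEnd ℂ) (kern w u) • Φ (z + u) g ∂(gaussian n))
    (halpha : ∫⁻ z, ENNReal.ofReal (Real.exp (‖z‖ ^ 2)) *
        ∫⁻ w, (‖γ z w‖₊ : ℝ≥0∞) ^ 2 * hsNormSq b (Xi z w) ∂(gaussian n)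
        ∂(gaussian n) < ∞)
    (Θ : Cn n → Cn n → H →L[ℂ] H)
    (hΘ : ∀ (x y : Cn n) (g : H),
      ContinuousLinearMap.adjoint (Θ x y) g = γ x (y - x) • (kern x y • Xi x (y - x) g)) :
    ∫⁻ x, ∫⁻ y, hsNormSq b (Θ x y) ∂(gaussian n) ∂(gaussian n) < ∞ :=
  weighted_kernel_hilbertSchmidt_general b γ Xi halpha Θ hΘ
end
end
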